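/- Let f : V₀ → ℝ be continuous and suppose every point of Γ_f lies on a horizontal line contained in Γ_f. Suppose the set M = {m ∈ ℝ : some horizontal line of slope m is contained in Γ_f} is nonempty and bounded below, and let m∞ = inf M. Then for every x₀ ≠ 0 and every z₀ with z₀ > −(m∞/2)·x₀², one has lim_{t→∞} f(t·x₀, 0, t²·z₀)/t = m∞·x₀. -/

import Mathlib

open MeasureTheory Filter

noncomputable section

/-- The Heisenberg group, identified with `ℝ³`. -/
abbrev H : Type := ℝ × ℝ × ℝ

/-- Heisenberg group multiplication. -/
def Hmul (p q : H) : H :=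
  (p.1 + q.1, p.2.1 + q.2.1, p.2.2 + q.2.2 + (p.1 * q.2.1 - p.2.1 * q.1) / 2)

/-- Heisenberg group inverse. -/
def Hinv (p : H) : H := (-p.1, -p.2.1, -p.2.2)

/-- The intrinsic projection `Π : ℍ → V₀`. -/
def Proj (p : H) : H := (p.1, 0, p.2.2 - p.1 * p.2.1 / 2)

/-- The `xz`-plane `V₀`. -/
def V0 : Set H := {p : H | p.2.1 = 0}

/-- The intrinsic graph of `f` over `D ⊆ V₀`. -/
def IGraph (D : Set H) (f : H → ℝ) : Set H :=
  {q : H | ∃ x z : ℝ, ((x, (0 : ℝ), z) ∈ D) ∧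
    q = (x, f (x, 0, z), z + x * f (x, 0, z) / 2)}

/-- The horizontal line through `p` with slope `m` (direction `(1, m, 0)`). -/
def horizLine (p : H) (m : ℝ) : Set H := {q : H | ∃ t : ℝ, q = Hmul p (t, t * m, 0)}

/-- The horizontal line through `p` with direction `(a, b, 0)`. -/
def horizLineGen (p : H) (a b : ℝ) : Set H := {q : H | ∃ t : ℝ, q = Hmul p (t * a, t * b, 0)}

/-- `Γ_f` is ruled: every point of `Γ_f` lies on a horizontal line contained in `Γ_f`. -/
def IsRuled (S : Set H) : Prop :=
  ∀ p ∈ S, ∃ q : H, ∃ a b : ℝ, (a, b) ≠ ((0 : ℝ), (0 : ℝ)) ∧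
    p ∈ horizLineGen q a b ∧ horizLineGen q a b ⊆ S

/-!
A horizontal line of slope `m` in `Γ_f` projects to a parabola `z = c - a x - (m/2) x²` in `V₀`
along which `f(x, 0, z) = a + m x`. Two such parabolas cannot cross: at a common point `f` has one
value, which forces them to be tangent there. So if the parabola through `(X, W)` lies above the
one of slope `m` at `X`, it lies above it everywhere, and the discriminant of the difference gives
`(f(X, 0, W) - a - m X)² ≤ 2 (m - m∞) (W - c + a X + (m/2) X²)`. When `z₀ + (m/2) x₀² > 0` the
point `(t x₀, t² z₀)` is above the parabola for large `t`, with the last factor of order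
`t² (z₀ + (m/2) x₀²)`; dividing by `t` and letting `m ∈ M` tend to `m∞` gives the limit.
-/

open Set Topology

def slopes (S : Set H) : Set ℝ := {m : ℝ | ∃ p : H, horizLine p m ⊆ S}

/-- The intrinsic projection of a horizontal line of slope `m` to `V₀` is a parabola of this
form. -/
def charParabola (m a c x : ℝ) : ℝ := c - a * x - m / 2 * x ^ 2

def IsCharacteristic (f : H → ℝ) (m a c : ℝ) : Prop :=
  ∀ x : ℝ, f (x, 0, charParabola m a c x) = a + m * x

section IntrinsicGraph

variable {f : H → ℝ}

theorem mem_IGraph_V0_iff {q : H} : q ∈ IGraph V0 f ↔ f (Proj q) = q.2.1 := by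
  obtain ⟨x, y, z⟩ := q
  constructor
  · rintro ⟨x, z, -, h⟩
    simp only [Prod.mk.injEq] at h
    obtain ⟨rfl, rfl, rfl⟩ := h
    simp only [Proj]
    ring_nf
  · intro h
    refine ⟨x, z - x * y / 2, rfl, ?_⟩
    simp only [Proj] at h
    simp only [h, Prod.mk.injEq, true_and]
    ring

theorem fst_ne_zero_of_horizLineGen_subset_IGraph {p : H} {a b : ℝ} (hab : (a, b) ≠ (0, 0))
    (h : horizLineGen p a b ⊆ IGraph V0 f) : a ≠ 0 := by
  rintro rfl
  have hb : b ≠ 0 := fun hb => hab (by rw [hb])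
  -- the points `p` and `p · (0, 1, 0)` have the same projection but different `y`-coordinates
  have h₀ := mem_IGraph_V0_iff.1 (h (⟨0, rfl⟩ : Hmul p (0 * 0, 0 * b, 0) ∈ horizLineGen p 0 b))
  have h₁ := mem_IGraph_V0_iff.1
    (h (⟨b⁻¹, rfl⟩ : Hmul p (b⁻¹ * 0, b⁻¹ * b, 0) ∈ horizLineGen p 0 b))
  simp only [Hmul, Proj, mul_zero, zero_mul, add_zero, sub_zero, zero_div, mul_one,
    inv_mul_cancel₀ hb] at h₀ h₁
  rw [show p.2.2 + p.1 / 2 - p.1 * (p.2.1 + 1) / 2 = p.2.2 - p.1 * p.2.1 / 2 by ring, h₀] at h₁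
  linarith

theorem horizLineGen_eq_horizLine (p : H) {a : ℝ} (ha : a ≠ 0) (b : ℝ) :
    horizLineGen p a b = horizLine p (b / a) := by
  ext q
  constructor
  · rintro ⟨t, rfl⟩
    exact ⟨t * a, by field_simp⟩
  · rintro ⟨t, rfl⟩
    exact ⟨t / a, by field_simp⟩

theorem exists_isCharacteristic_of_horizLine_subset {p : H} {m : ℝ}
    (h : horizLine p m ⊆ IGraph V0 f) :
    ∃ a c, IsCharacteristic f m a c ∧
      ∀ q ∈ horizLine p m, (Proj q).2.2 = charParabola m a c q.1 := by
  set a := p.2.1 - m * p.1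
  set c := p.2.2 - p.1 * p.2.1 / 2 + a * p.1 + m / 2 * p.1 ^ 2
  have hproj : ∀ t : ℝ,
      Proj (Hmul p (t, t * m, 0)) = (p.1 + t, 0, charParabola m a c (p.1 + t)) := by
    intro t
    simp only [Proj, Hmul, charParabola, a, c, Prod.mk.injEq, true_and]
    ring
  refine ⟨a, c, fun x => ?_, ?_⟩
  · have hx := mem_IGraph_V0_iff.1 (h ⟨x - p.1, rfl⟩)
    rw [hproj, add_sub_cancel] at hx
    rw [hx]
    simp only [Hmul, a]
    ring
  · rintro q ⟨t, rfl⟩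
    rw [hproj]
    rfl

theorem IsRuled.exists_isCharacteristic (hruled : IsRuled (IGraph V0 f)) (x w : ℝ) :
    ∃ m a c, m ∈ slopes (IGraph V0 f) ∧ IsCharacteristic f m a c ∧ charParabola m a c x = w := by
  set q : H := (x, f (x, 0, w), w + x * f (x, 0, w) / 2)
  have hProj : Proj q = (x, 0, w) := by
    simp only [Proj, q, Prod.mk.injEq, true_and]
    ring
  have hq : q ∈ IGraph V0 f := mem_IGraph_V0_iff.2 (by rw [hProj])
  obtain ⟨p, a, b, hab, hqp, hsub⟩ := hruled q hq
  rw [horizLineGen_eq_horizLine p (fst_ne_zero_of_horizLineGen_subset_IGraph hab hsub)] at hqp hsub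
  obtain ⟨a', c, hchar, hline⟩ := exists_isCharacteristic_of_horizLine_subset hsub
  exact ⟨b / a, a', c, ⟨p, hsub⟩, hchar, by rw [← hline q hqp, hProj]⟩

end IntrinsicGraph

section Characteristics

variable {f : H → ℝ} {m a c m' a' c' : ℝ}

/-- `f` has one value at a common point, so the two parabolas have the same slope there. -/
theorem charParabola_sub_charParabola_of_eq (hP : IsCharacteristic f m a c)
    (hP' : IsCharacteristic f m' a' c') {r : ℝ}
    (hr : charParabola m a c r = charParabola m' a' c' r) (x : ℝ) :
    charParabola m a c x - charParabola m' a' c' x = -((m - m') / 2) * (x - r) ^ 2 := by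
  have hval : a + m * r = a' + m' * r := by rw [← hP r, ← hP' r, hr]
  simp only [charParabola] at hr ⊢
  linear_combination hr - (x - r) * hval

theorem charParabola_le_of_lt (hP : IsCharacteristic f m a c) (hP' : IsCharacteristic f m' a' c')
    {x : ℝ} (hx : charParabola m a c x < charParabola m' a' c' x) (u : ℝ) :
    charParabola m a c u ≤ charParabola m' a' c' u := by
  -- if they crossed, they would meet, and then be tangent with their difference of one sign
  by_contra! hu
  set D := fun v => charParabola m a c v - charParabola m' a' c' v
  have hD : Continuous D := by unfold D charParabola; fun_prop
  obtain ⟨r, -, hr⟩ := intermediate_value_uIcc hD.continuousOn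
    (mem_uIcc.2 (Or.inl ⟨(sub_neg.2 hx).le, (sub_pos.2 hu).le⟩) : (0 : ℝ) ∈ uIcc (D x) (D u))
  have hx' := charParabola_sub_charParabola_of_eq hP hP' (sub_eq_zero.1 hr) x
  have hu' := charParabola_sub_charParabola_of_eq hP hP' (sub_eq_zero.1 hr) u
  have hk : 0 < (m - m') / 2 :=
    pos_of_mul_pos_left (by linarith : 0 < (m - m') / 2 * (x - r) ^ 2) (sq_nonneg _)
  nlinarith [mul_nonneg hk.le (sq_nonneg (u - r))]

/-- The discriminant of the nonnegative quadratic `charParabola m' a' c' - charParabola m a c`. -/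
theorem sq_le_of_charParabola_lt (hP : IsCharacteristic f m a c)
    (hP' : IsCharacteristic f m' a' c') {x : ℝ}
    (hx : charParabola m a c x < charParabola m' a' c' x) :
    (a' + m' * x - (a + m * x)) ^ 2
      ≤ 2 * (m - m') * (charParabola m' a' c' x - charParabola m a c x) := by
  have hnonneg : ∀ s : ℝ, 0 ≤ (m - m') / 2 * (s * s) + ((m - m') * x + (a - a')) * s
      + (charParabola m' a' c' x - charParabola m a c x) := by
    intro s
    have h := charParabola_le_of_lt hP hP' hx (x + s)
    simp only [charParabola] at h ⊢
    linarith
  have hd := discrim_le_zero hnonneg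
  rw [discrim] at hd
  linarith

end Characteristics

theorem tendsto_add_div_sub_div_sq_atTop (k b c : ℝ) :
    Tendsto (fun t : ℝ => k + b / t - c / t ^ 2) atTop (𝓝 k) := by
  have hb := tendsto_const_nhds (x := b).div_atTop tendsto_id
  have hc := tendsto_const_nhds (x := c).div_atTop (tendsto_pow_atTop two_ne_zero)
  simpa using (tendsto_const_nhds.add hb).sub hc

section RuledGraph

variable {f : H → ℝ} {m a c m₀ : ℝ}

theorem sq_sub_le_of_charParabola_lt (hruled : IsRuled (IGraph V0 f))
    (hm₀ : m₀ ∈ lowerBounds (slopes (IGraph V0 f))) (hP : IsCharacteristic f m a c) {x w : ℝ}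
    (hw : charParabola m a c x < w) :
    (f (x, 0, w) - (a + m * x)) ^ 2 ≤ 2 * (m - m₀) * (w - charParabola m a c x) := by
  obtain ⟨m', a', c', hm', hP', rfl⟩ := hruled.exists_isCharacteristic x w
  rw [hP']
  have hm₀m' := hm₀ hm'
  calc _ ≤ 2 * (m - m') * (charParabola m' a' c' x - charParabola m a c x) :=
        sq_le_of_charParabola_lt hP hP' hw
    _ ≤ _ := by gcongr

theorem eventually_abs_div_sub_le (hruled : IsRuled (IGraph V0 f))
    (hm₀ : m₀ ∈ lowerBounds (slopes (IGraph V0 f))) (hP : IsCharacteristic f m a c) {x₀ z₀ : ℝ}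
    (hz₀ : 0 < z₀ + m / 2 * x₀ ^ 2) :
    ∀ᶠ t in atTop, |f (t * x₀, 0, t ^ 2 * z₀) / t - (m * x₀ + a / t)|
      ≤ √(2 * (m - m₀) * (z₀ + m / 2 * x₀ ^ 2 + a * x₀ / t - c / t ^ 2)) := by
  filter_upwards [(tendsto_add_div_sub_div_sq_atTop _ (a * x₀) c).eventually (lt_mem_nhds hz₀),
    eventually_gt_atTop 0] with t hB ht
  have hdiff : t ^ 2 * z₀ - charParabola m a c (t * x₀)
      = t ^ 2 * (z₀ + m / 2 * x₀ ^ 2 + a * x₀ / t - c / t ^ 2) := by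
    simp only [charParabola]
    field_simp
    ring
  have hsq := sq_sub_le_of_charParabola_lt hruled hm₀ hP (x := t * x₀) (w := t ^ 2 * z₀)
    (sub_pos.1 (hdiff ▸ by positivity))
  rw [hdiff] at hsq
  apply Real.abs_le_sqrt
  rw [show f (t * x₀, 0, t ^ 2 * z₀) / t - (m * x₀ + a / t)
      = (f (t * x₀, 0, t ^ 2 * z₀) - (a + m * (t * x₀))) / t by field_simp; ring,
    div_pow, div_le_iff₀ (by positivity)]
  linarith

theorem eventually_abs_div_sub_lt (hruled : IsRuled (IGraph V0 f))
    (hm₀ : m₀ ∈ lowerBounds (slopes (IGraph V0 f))) (hP : IsCharacteristic f m a c) {x₀ z₀ η : ℝ}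
    (hz₀ : 0 < z₀ + m / 2 * x₀ ^ 2)
    (hη : |(m - m₀) * x₀| + √(2 * (m - m₀) * (z₀ + m / 2 * x₀ ^ 2)) < η) :
    ∀ᶠ t in atTop, |f (t * x₀, 0, t ^ 2 * z₀) / t - m₀ * x₀| < η := by
  have hbound : Tendsto (fun t : ℝ => |(m - m₀) * x₀ + a / t|
      + √(2 * (m - m₀) * (z₀ + m / 2 * x₀ ^ 2 + a * x₀ / t - c / t ^ 2))) atTop
      (𝓝 (|(m - m₀) * x₀| + √(2 * (m - m₀) * (z₀ + m / 2 * x₀ ^ 2)))) := by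
    have ha : Tendsto (fun t : ℝ => a / t) atTop (𝓝 0) := tendsto_const_nhds.div_atTop tendsto_id
    have h := ((tendsto_const_nhds (x := (m - m₀) * x₀)).add ha).abs.add
      (((tendsto_add_div_sub_div_sq_atTop (z₀ + m / 2 * x₀ ^ 2) (a * x₀) c).const_mul
        (2 * (m - m₀))).sqrt)
    rwa [add_zero] at h
  filter_upwards [eventually_abs_div_sub_le hruled hm₀ hP hz₀,
    hbound.eventually (gt_mem_nhds hη)] with t hclose hsmall
  calc _ = |(f (t * x₀, 0, t ^ 2 * z₀) / t - (m * x₀ + a / t)) + ((m - m₀) * x₀ + a / t)| := by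
        ring_nf
    _ ≤ _ := abs_add_le _ _
    _ < η := by linarith

end RuledGraph

theorem scaling_limit_halfplane_general
    (f : H → ℝ)
    (hruled : IsRuled (IGraph V0 f))
    (M : Set ℝ) (hM : M = {m : ℝ | ∃ p : H, horizLine p m ⊆ IGraph V0 f})
    (hMne : M.Nonempty) (hMbdd : BddBelow M)
    (x₀ z₀ : ℝ) (hz₀ : z₀ > -(sInf M / 2) * x₀ ^ 2) :
    Tendsto (fun t : ℝ => f (t * x₀, 0, t ^ 2 * z₀) / t) atTop
      (nhds (sInf M * x₀)) := by
  set φ : ℝ → ℝ := fun m => |(m - sInf M) * x₀| + √(2 * (m - sInf M) * (z₀ + m / 2 * x₀ ^ 2))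
  have hφ : Continuous φ := by fun_prop
  refine Metric.tendsto_nhds.2 fun ε hε => ?_
  obtain ⟨m, hmε, hmM⟩ := mem_closure_iff_nhds.1 (csInf_mem_closure hMne hMbdd) _
    (hφ.continuousAt.preimage_mem_nhds (Iio_mem_nhds (by simpa [φ] using hε)))
  have hlow : sInf M ∈ lowerBounds M := fun m hm => csInf_le hMbdd hm
  have hm := hlow hmM
  subst hM
  obtain ⟨p, hp⟩ := hmM
  obtain ⟨a, c, hP, -⟩ := exists_isCharacteristic_of_horizLine_subset hp
  have hz : 0 < z₀ + m / 2 * x₀ ^ 2 := by nlinarith [mul_nonneg (sub_nonneg.2 hm) (sq_nonneg x₀)]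
  simpa only [Real.dist_eq] using eventually_abs_div_sub_lt hruled hlow hP hz hmε

/-- scaling limit of a ruled entire intrinsic graph in the
half-plane region.  Let `M` be the set of slopes of horizontal lines contained
in `Γ_f`; if `M` is nonempty and bounded below with `m∞ = inf M`, then for
`x₀ ≠ 0` and `z₀ > −(m∞/2)x₀²`, `f(t x₀, 0, t² z₀)/t → m∞ x₀` as `t → ∞`. -/
theorem scaling_limit_halfplane
    (f : H → ℝ) (hf : ContinuousOn f V0)
    (hruled : IsRuled (IGraph V0 f))
    (M : Set ℝ) (hM : M = {m : ℝ | ∃ p : H, horizLine p m ⊆ IGraph V0 f})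
    (hMne : M.Nonempty) (hMbdd : BddBelow M)
    (x₀ z₀ : ℝ) (hx₀ : x₀ ≠ 0) (hz₀ : z₀ > -(sInf M / 2) * x₀ ^ 2) :
    Tendsto (fun t : ℝ => f (t * x₀, 0, t ^ 2 * z₀) / t) atTop
      (nhds (sInf M * x₀)) :=
  scaling_limit_halfplane_general f hruled M hM hMne hMbdd x₀ z₀ hz₀
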